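/- Let φ ∈ C²(ℝ²) with Dφ(x₀) ≠ 0. Then the median of φ over the circle ∂B(x₀,r) (with respect to arclength measure) satisfies med_{∂B(x₀,r)} φ = φ(x₀) + (r²/2)·Δ₁φ(x₀) + o(r²) as r → 0, where Δ₁φ = |Dφ| div(Dφ/|Dφ|) is the 1-Laplacian, equal at a point with nonzero gradient to the second derivative of φ in the direction orthogonal to Dφ. -/

import Mathlib

/-!
Let `a = |Dφ(x₀)|` and `ψ` the argument of the gradient, so that `v = ±i e^{iψ}` and
`Dφ(x₀) e^{iθ} = a cos(θ - ψ)`. Writing `e^{iθ} = cos(θ - arg v) v + sin(θ - arg v) iv` shows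
`D²φ(x₀)(e^{iθ}, e^{iθ}) = D²φ(x₀)(v, v) + O(|cos(θ - ψ)|)`, so by Taylor's formula
`φ(x₀ + r e^{iθ}) = φ(x₀) + r²/2 D²φ(x₀)(v, v) + r a cos(θ - ψ) + O(r² |cos(θ - ψ)|) + o(r²)`.
If the median exceeded `φ(x₀) + r²/2 D²φ(x₀)(v, v) + εr²`, the set where `φ` is at least the
median would lie in the arc `{cos(θ - ψ) ≥ εr/(4a)}`, which is shorter than a half-circle,
contradicting the median property. The bound from below is symmetric.
-/

open MeasureTheory Set Metric Real Filter Topology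

/-- `m` is a median of `u` over the circle `∂B(x,r)` with respect to arclength measure,
parametrized by `θ ↦ x + r e^{iθ}`. -/
def IsCircleMedian (x : ℂ) (r : ℝ) (u : ℂ → ℝ) (m : ℝ) : Prop :=
  volume (Ioc (0:ℝ) (2*π)) / 2 ≤ volume {θ ∈ Ioc (0:ℝ) (2*π) | m ≤ u (circleMap x r θ)} ∧
  volume (Ioc (0:ℝ) (2*π)) / 2 ≤ volume {θ ∈ Ioc (0:ℝ) (2*π) | u (circleMap x r θ) ≤ m}

/-- `u` has the local median value property on `Ω`. -/
def HasLMVP (Ω : Set ℂ) (u : ℂ → ℝ) : Prop :=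
  ∃ R : ℂ → ℝ, ContinuousOn R Ω ∧
    (∀ x ∈ Ω, 0 < R x ∧ R x ≤ Metric.infDist x Ωᶜ) ∧
    (∀ x ∈ Ω, ∀ r : ℝ, 0 < r → r ≤ R x → IsCircleMedian x r u (u x))

open Asymptotics

theorem volume_Ioc_zero_two_pi_div_two : volume (Ioc (0:ℝ) (2*π)) / 2 = ENNReal.ofReal π := by
  rw [Real.volume_Ioc, sub_zero, mul_comm, ENNReal.ofReal_mul pi_pos.le, ENNReal.ofReal_ofNat,
    ENNReal.mul_div_cancel_right two_ne_zero ENNReal.ofNat_ne_top]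

/-- By `2π`-periodicity the set may be measured in the window `(ψ - π, ψ + π]` instead, where it
is `[ψ - arccos t, ψ + arccos t]`. -/
theorem volume_setOf_le_cos_sub_lt_pi (ψ : ℝ) {t : ℝ} (ht : 0 < t) :
    volume {θ ∈ Ioc (0:ℝ) (2*π) | t ≤ cos (θ - ψ)} < ENNReal.ofReal π := by
  set A := {θ : ℝ | t ≤ cos (θ - ψ)}
  have hA : MeasurableSet A :=
    measurableSet_le measurable_const (continuous_cos.comp (continuous_sub_right ψ)).measurable
  have hper : ∀ g : AddSubgroup.zmultiples (2*π), (fun x => g +ᵥ x) ⁻¹' A = A := by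
    rintro ⟨_, n, rfl⟩
    ext θ
    simp [A, add_sub_assoc, add_comm _ (θ - ψ)]
  have hshift : volume {θ ∈ Ioc (0:ℝ) (2*π) | t ≤ cos (θ - ψ)}
      = volume (A ∩ Ioc (ψ - π) (ψ - π + 2*π)) := by
    rw [show {θ ∈ Ioc (0:ℝ) (2*π) | t ≤ cos (θ - ψ)} = A ∩ Ioc 0 (0 + 2*π) by
      rw [zero_add, inter_comm]; rfl]
    exact (isAddFundamentalDomain_Ioc two_pi_pos 0).measure_set_eq
      (isAddFundamentalDomain_Ioc two_pi_pos _) hA hper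
  have hsub : A ∩ Ioc (ψ - π) (ψ - π + 2*π) ⊆ Icc (ψ - arccos t) (ψ + arccos t) := by
    rintro θ ⟨hθA, hθ₁, hθ₂⟩
    have habs : |θ - ψ| ≤ arccos t := by
      rw [← arccos_cos (abs_nonneg _) (abs_le.2 ⟨by linarith, by linarith⟩), cos_abs]
      exact arccos_le_arccos hθA
    constructor <;> linarith [abs_le.1 habs]
  calc volume {θ ∈ Ioc (0:ℝ) (2*π) | t ≤ cos (θ - ψ)}
      ≤ volume (Icc (ψ - arccos t) (ψ + arccos t)) := hshift ▸ measure_mono hsub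
    _ = ENNReal.ofReal (2 * arccos t) := by rw [Real.volume_Icc]; ring_nf
    _ < ENNReal.ofReal π :=
      (ENNReal.ofReal_lt_ofReal_iff pi_pos).2 (by linarith [arccos_lt_pi_div_two.2 ht])

theorem taylor_two_isLittleO {E F : Type*} [NormedAddCommGroup E] [NormedSpace ℝ E]
    [NormedAddCommGroup F] [NormedSpace ℝ F] {f : E → F} {f' : E → E →L[ℝ] F}
    {f'' : E →L[ℝ] E →L[ℝ] F} {x₀ : E} (hf : ∀ᶠ x in 𝓝 x₀, HasFDerivAt f (f' x) x)
    (hf' : HasFDerivAt f' f'' x₀) :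
    (fun x => f x - f x₀ - f' x₀ (x - x₀) - (1/2 : ℝ) • f'' (x - x₀) (x - x₀))
      =o[𝓝 x₀] fun x => ‖x - x₀‖ ^ 2 := by
  obtain ⟨δ, hδ, hball⟩ := Metric.eventually_nhds_iff_ball.1 hf
  have hsymm : ∀ v w, f'' v w = f'' w v := second_derivative_symmetric_of_eventually hf hf'
  have hderiv : ∀ x ∈ ball x₀ δ, HasFDerivWithinAt
      (fun x => f x - f x₀ - f' x₀ (x - x₀) - (1/2 : ℝ) • f'' (x - x₀) (x - x₀))
      (f' x - f' x₀ - f'' (x - x₀)) (ball x₀ δ) x := by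
    intro x hx
    have hq : HasFDerivAt (fun x => f'' (x - x₀) (x - x₀))
        (f'' (x - x₀) + f''.flip (x - x₀)) x := by
      simpa using (f''.hasFDerivAt.comp x ((hasFDerivAt_id x).sub_const x₀)).clm_apply
        ((hasFDerivAt_id x).sub_const x₀)
    refine ((((hball x hx).sub_const _).sub ((f' x₀).hasFDerivAt.comp x
      ((hasFDerivAt_id x).sub_const x₀))).sub (hq.const_smul _)).hasFDerivWithinAt.congr_fderiv ?_
    ext w
    simp only [ContinuousLinearMap.comp_id, one_div, map_sub, smul_add, sub_apply, add_apply,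
      smul_apply, ContinuousLinearMap.flip_apply, hsymm w, sub_right_inj]
    module
  have hnhds : 𝓝[ball x₀ δ] x₀ = 𝓝 x₀ := nhdsWithin_eq_nhds.2 (ball_mem_nhds x₀ hδ)
  have hsmall : (fun x => f' x - f' x₀ - f'' (x - x₀)) =o[𝓝[ball x₀ δ] x₀]
      fun x => ‖x - x₀‖ ^ 1 := by
    simpa [hnhds] using hf'.isLittleO.norm_right
  simpa [hnhds] using (convex_ball x₀ δ).isLittleO_pow_succ (mem_ball_self hδ) hderiv hsmall

theorem exp_ofReal_mul_I_eq_smul_add_smul {v : ℂ} (hv : ‖v‖ = 1) (θ : ℝ) :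
    Complex.exp (θ * Complex.I)
      = cos (θ - v.arg) • v + sin (θ - v.arg) • (Complex.I * v) := by
  have hv' : Complex.exp (v.arg * Complex.I) = v := by
    simpa [hv] using Complex.norm_mul_exp_arg_mul_I v
  rw [show (θ : ℂ) = ↑(θ - v.arg) + v.arg by push_cast; ring, add_mul, Complex.exp_add, hv',
    Complex.exp_mul_I]
  simp only [Complex.real_smul, ← Complex.ofReal_cos, ← Complex.ofReal_sin]
  ring

theorem abs_apply_apply_sub_le {E : Type*} [NormedAddCommGroup E] [NormedSpace ℝ E]
    (B : E →L[ℝ] E →L[ℝ] ℝ) {v w : E} (hv : ‖v‖ = 1) (hw : ‖w‖ = 1) {c s : ℝ}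
    (hcs : c ^ 2 + s ^ 2 = 1) :
    |B (c • v + s • w) (c • v + s • w) - B v v| ≤ 4 * ‖B‖ * |s| := by
  have hB : ∀ x y, x = v ∨ x = w → y = v ∨ y = w → |B x y| ≤ ‖B‖ := by
    rintro x y hx hy
    have := B.le_opNorm₂ x y
    rcases hx with rfl | rfl <;> rcases hy with rfl | rfl <;> simpa [hv, hw] using this
  have hc : |c| ≤ 1 := (sq_le_one_iff_abs_le_one _).1 (by nlinarith)
  have hs : |s| ≤ 1 := (sq_le_one_iff_abs_le_one _).1 (by nlinarith)
  -- `c ^ 2 - 1 = -s ^ 2` puts a factor `s` in front of every term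
  have hexpand : B (c • v + s • w) (c • v + s • w) - B v v
      = s * (s * (B w w - B v v) + c * (B v w + B w v)) := by
    simp only [map_add, map_smul, FunLike.coe_add, Pi.add_apply, FunLike.coe_smul, Pi.smul_apply,
      smul_eq_mul]
    linear_combination (B v v) * hcs
  rw [hexpand, abs_mul, mul_comm]
  gcongr
  calc |s * (B w w - B v v) + c * (B v w + B w v)|
      ≤ |s| * (|B w w| + |B v v|) + |c| * (|B v w| + |B w v|) := by
        grw [abs_add_le, abs_mul, abs_mul, abs_sub _ _, abs_add_le]
    _ ≤ 1 * (‖B‖ + ‖B‖) + 1 * (‖B‖ + ‖B‖) := by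
        gcongr <;> simp_all
    _ = 4 * ‖B‖ := by ring

theorem exists_abs_mul_cos_eq (b α : ℝ) : ∃ ψ, ∀ θ, b * sin (θ - α) = |b| * cos (θ - ψ) := by
  rcases le_or_gt 0 b with hb | hb
  · refine ⟨α + π / 2, fun θ => ?_⟩
    rw [abs_of_nonneg hb, show θ - (α + π / 2) = θ - α - π / 2 by ring, cos_sub_pi_div_two]
  · refine ⟨α - π / 2, fun θ => ?_⟩
    rw [abs_of_neg hb, show θ - (α - π / 2) = θ - α + π / 2 by ring, cos_add_pi_div_two]
    ring

theorem exists_apply_exp_eq_mul_cos {L : ℂ →L[ℝ] ℝ} (hL : L ≠ 0) {v : ℂ} (hv : ‖v‖ = 1)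
    (hLv : L v = 0) (B : ℂ →L[ℝ] ℂ →L[ℝ] ℝ) :
    ∃ a > 0, ∃ ψ, ∀ θ : ℝ, L (Complex.exp (θ * Complex.I)) = a * cos (θ - ψ) ∧
      |B (Complex.exp (θ * Complex.I)) (Complex.exp (θ * Complex.I)) - B v v|
        ≤ 4 * ‖B‖ * |cos (θ - ψ)| := by
  set b := L (Complex.I * v)
  have hL_exp : ∀ θ : ℝ, L (Complex.exp (θ * Complex.I)) = b * sin (θ - v.arg) := by
    intro θ
    rw [exp_ofReal_mul_I_eq_smul_add_smul hv, map_add, map_smul, map_smul, hLv, smul_eq_mul,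
      smul_eq_mul, mul_zero, zero_add, mul_comm]
  have hb : b ≠ 0 := by
    intro hb
    refine hL (ContinuousLinearMap.ext fun z => ?_)
    rw [← Complex.norm_mul_exp_arg_mul_I z, ← Complex.real_smul, map_smul, hL_exp, hb]
    simp
  obtain ⟨ψ, hψ⟩ := exists_abs_mul_cos_eq b v.arg
  refine ⟨|b|, abs_pos.2 hb, ψ, fun θ => ⟨(hL_exp θ).trans (hψ θ), ?_⟩⟩
  have hcos : |cos (θ - ψ)| = |sin (θ - v.arg)| := by
    have := congrArg abs (hψ θ)
    rw [abs_mul, abs_mul, abs_abs] at this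
    exact (mul_left_cancel₀ (abs_pos.2 hb).ne' this).symm
  rw [hcos, exp_ofReal_mul_I_eq_smul_add_smul hv]
  exact abs_apply_apply_sub_le B hv (by simp [hv]) (cos_sq_add_sin_sq _)

theorem div_le_of_abs_sub_mul_le {g c a K ε r : ℝ} (ha : 0 < a) (hr : 0 < r) (hε : 0 < ε)
    (hrK : r * K ≤ a) (h : |g - r * a * c| ≤ r ^ 2 / 2 * (K * |c| + ε)) (hg : ε * r ^ 2 ≤ g) :
    ε * r / (4 * a) ≤ c := by
  have hg' := (abs_le.1 h).2
  have hεr : 0 < ε * r ^ 2 := by positivity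
  rcases le_or_gt c 0 with hc | hc
  · rw [abs_of_nonpos hc] at hg'
    have hrc : 0 ≤ r * -c := mul_nonneg hr.le (neg_nonneg.2 hc)
    nlinarith [mul_nonneg hrc (sub_nonneg.2 hrK), mul_nonneg hrc ha.le]
  · rw [abs_of_pos hc] at hg'
    rw [div_le_iff₀ (by positivity)]
    nlinarith [mul_le_mul_of_nonneg_left hrK (mul_nonneg hr.le hc.le)]

theorem sub_lt_of_pi_le_volume {f : ℝ → ℝ} {M c₀ a K ε r ψ : ℝ} (ha : 0 < a) (hr : 0 < r)
    (hε : 0 < ε) (hrK : r * K ≤ a)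
    (hf : ∀ θ, |f θ - c₀ - r * a * cos (θ - ψ)| ≤ r ^ 2 / 2 * (K * |cos (θ - ψ)| + ε))
    (hM : ENNReal.ofReal π ≤ volume {θ ∈ Ioc (0:ℝ) (2*π) | M ≤ f θ}) :
    M - c₀ < ε * r ^ 2 := by
  by_contra! hM'
  refine (volume_setOf_le_cos_sub_lt_pi ψ (t := ε * r / (4 * a)) (by positivity)).not_ge
    (hM.trans (measure_mono ?_))
  rintro θ ⟨hθ, hMθ⟩
  exact ⟨hθ, div_le_of_abs_sub_mul_le ha hr hε hrK (hf θ) (by linarith)⟩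

theorem IsCircleMedian.abs_sub_le {x : ℂ} {u : ℂ → ℝ} {M c₀ a K ε r ψ : ℝ}
    (hmed : IsCircleMedian x r u M) (ha : 0 < a) (hr : 0 < r) (hε : 0 < ε) (hrK : r * K ≤ a)
    (hu : ∀ θ, |u (circleMap x r θ) - c₀ - r * a * cos (θ - ψ)|
      ≤ r ^ 2 / 2 * (K * |cos (θ - ψ)| + ε)) :
    |M - c₀| ≤ ε * r ^ 2 := by
  rw [IsCircleMedian, volume_Ioc_zero_two_pi_div_two] at hmed
  -- the lower bound is the upper bound for `-u`, modelled by `cos (θ - (ψ + π)) = -cos (θ - ψ)`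
  have hlow := sub_lt_of_pi_le_volume (f := fun θ => -u (circleMap x r θ)) (M := -M) (c₀ := -c₀)
    (ψ := ψ + π) ha hr hε hrK (fun θ => by
      rw [sub_add_eq_sub_sub, cos_sub_pi, abs_neg, ← abs_neg]
      convert hu θ using 2
      ring)
    (by simpa using hmed.2)
  exact abs_le.2 ⟨by linarith, (sub_lt_of_pi_le_volume ha hr hε hrK hu hmed.1).le⟩

theorem abs_comp_circleMap_sub_le {φ : ℂ → ℝ} {x₀ v : ℂ} {L : ℂ →L[ℝ] ℝ}
    {B : ℂ →L[ℝ] ℂ →L[ℝ] ℝ} {a ψ K ε r θ : ℝ} (hr : 0 ≤ r)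
    (hL : L (Complex.exp (θ * Complex.I)) = a * cos (θ - ψ))
    (hB : |B (Complex.exp (θ * Complex.I)) (Complex.exp (θ * Complex.I)) - B v v|
      ≤ K * |cos (θ - ψ)|)
    (hT : ‖φ (circleMap x₀ r θ) - φ x₀ - L (circleMap x₀ r θ - x₀)
      - (1/2 : ℝ) • B (circleMap x₀ r θ - x₀) (circleMap x₀ r θ - x₀)‖
        ≤ ε / 2 * ‖circleMap x₀ r θ - x₀‖ ^ 2) :
    |φ (circleMap x₀ r θ) - (φ x₀ + r ^ 2 / 2 * B v v) - r * a * cos (θ - ψ)|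
      ≤ r ^ 2 / 2 * (K * |cos (θ - ψ)| + ε) := by
  set e := Complex.exp (θ * Complex.I)
  have hw : circleMap x₀ r θ - x₀ = r • e := by
    rw [circleMap_sub_center, circleMap_zero, Complex.real_smul]
  simp only [hw, map_smul, hL, norm_smul, e, Complex.norm_exp_ofReal_mul_I, FunLike.coe_smul,
    Pi.smul_apply, smul_eq_mul, Real.norm_eq_abs, mul_one, abs_of_nonneg hr] at hT
  calc |φ (circleMap x₀ r θ) - (φ x₀ + r ^ 2 / 2 * B v v) - r * a * cos (θ - ψ)|
      = |(φ (circleMap x₀ r θ) - φ x₀ - r * (a * cos (θ - ψ)) - 1 / 2 * (r * (r * B e e)))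
          + r ^ 2 / 2 * (B e e - B v v)| := by ring_nf
    _ ≤ ε / 2 * r ^ 2 + r ^ 2 / 2 * (K * |cos (θ - ψ)|) := by
      grw [abs_add_le, hT, abs_mul, abs_of_nonneg (by positivity : 0 ≤ r ^ 2 / 2), hB]
    _ = r ^ 2 / 2 * (K * |cos (θ - ψ)| + ε) := by ring

theorem median_asymptotic_expansion (φ : ℂ → ℝ) (hφ : ContDiff ℝ 2 φ) (x₀ : ℂ)
    (hD : fderiv ℝ φ x₀ ≠ 0) (v : ℂ) (hv : ‖v‖ = 1) (hvo : fderiv ℝ φ x₀ v = 0)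
    (m : ℝ → ℝ) (hm : ∀ᶠ r in 𝓝[>] (0:ℝ), IsCircleMedian x₀ r φ (m r)) :
    (fun r : ℝ => m r - φ x₀ - r^2 / 2 * iteratedFDeriv ℝ 2 φ x₀ ![v, v])
      =o[𝓝[>] (0:ℝ)] fun r : ℝ => r^2 := by
  set B := fderiv ℝ (fderiv ℝ φ) x₀
  obtain ⟨a, ha, ψ, hcircle⟩ := exists_apply_exp_eq_mul_cos hD hv hvo B
  have htaylor := taylor_two_isLittleO (x₀ := x₀)
    (.of_forall fun x => (hφ.differentiable two_ne_zero x).hasFDerivAt)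
    ((hφ.fderiv_right (m := 1) le_rfl).differentiable one_ne_zero x₀).hasFDerivAt
  rw [iteratedFDeriv_two_apply, isLittleO_iff]
  intro ε hε
  obtain ⟨δ, hδ, hT⟩ := Metric.eventually_nhds_iff.1 (isLittleO_iff.1 htaylor (half_pos hε))
  have hsmall : ∀ᶠ r in 𝓝 (0:ℝ), r < δ ∧ r * (4 * ‖B‖) < a :=
    (eventually_lt_nhds hδ).and
      ((continuous_mul_const _).tendsto' 0 0 (zero_mul _) |>.eventually_lt_const ha)
  filter_upwards [hm, nhdsWithin_le_nhds hsmall, self_mem_nhdsWithin]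
    with r hmed ⟨hrδ, hrK⟩ (hr : 0 < r)
  simp only [Matrix.cons_val_zero, Matrix.cons_val_one, Real.norm_eq_abs,
    abs_of_nonneg (sq_nonneg r), ← sub_add_eq_sub_sub]
  refine hmed.abs_sub_le ha hr hε hrK.le fun θ =>
    abs_comp_circleMap_sub_le hr.le (hcircle θ).1 (hcircle θ).2 ?_
  simpa using hT (y := circleMap x₀ r θ) (by rwa [mem_sphere.1 (circleMap_mem_sphere x₀ hr.le θ)])
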